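/- arXiv:1805.08236 — 2 statements merged into one kernel-verified Lean document; each statement's English description precedes it below -/
import Mathlib

section
/- Let a, b ∈ ℝ with b > 0, and set λ_± = a ± √(a² + b). Then the function r(t) = (λ_− e^{λ_+ C + λ_− t} − λ_+ e^{λ_+ t + λ_− C}) / (e^{λ_+ C + λ_− t} − e^{λ_+ t + λ_− C}), where C = (λ_− − λ_+)^{-1} log(λ_−(λ_+ − 1)/(λ_+(λ_− − 1))) + T, solves the Riccati equation dr/dt = −r² + 2 a r + b with terminal condition r(T) = −b. -/
open Real

/-- The explicit solution of the Riccati equation `dr/dt = −r² + 2ar + b` with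
terminal condition `r(T) = −b`, where `λ± = a ± √(a² + b)` and
`C = (λ₋ − λ₊)⁻¹ log(λ₋(λ₊ − 1)/(λ₊(λ₋ − 1))) + T`. -/
theorem stmt2 (a b T : ℝ) (hb : 0 < b)
    (lp lm C : ℝ)
    (hlp : lp = a + Real.sqrt (a ^ 2 + b))
    (hlm : lm = a - Real.sqrt (a ^ 2 + b))
    (hC : C = (lm - lp)⁻¹ * Real.log (lm * (lp - 1) / (lp * (lm - 1))) + T)
    (hlp1 : lp ≠ 1) (hlm1 : lm ≠ 1)
    (hlog : 0 < lm * (lp - 1) / (lp * (lm - 1)))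
    (r : ℝ → ℝ)
    (hr : ∀ t, r t =
      (lm * Real.exp (lp * C + lm * t) - lp * Real.exp (lp * t + lm * C)) /
      (Real.exp (lp * C + lm * t) - Real.exp (lp * t + lm * C)))
    (hden : ∀ t ∈ Set.Icc 0 T,
      Real.exp (lp * C + lm * t) - Real.exp (lp * t + lm * C) ≠ 0) :
    (∀ t ∈ Set.Icc 0 T, HasDerivAt r (-(r t) ^ 2 + 2 * a * r t + b) t) ∧
    r T = -b := by
  have hb2 : (0:ℝ) ≤ a^2 + b := by positivity
  have hs2 : Real.sqrt (a^2+b) ^ 2 = a^2 + b := Real.sq_sqrt hb2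
  have hs : 0 < Real.sqrt (a^2+b) := Real.sqrt_pos.2 (by positivity)
  have hne : lp ≠ lm := by rw [hlp, hlm]; intro h; nlinarith
  have hml : lm - lp ≠ 0 := sub_ne_zero.2 (Ne.symm hne)
  have hprod : b = -(lp*lm) := by rw [hlp, hlm]; nlinarith
  have hsum : 2*a = lp + lm := by rw [hlp, hlm]; ring
  have hlpne : lp ≠ 0 := by rintro rfl; simp at hlog
  have hlmne : lm ≠ 0 := by rintro rfl; simp at hlog
  have hlp1' : lp - 1 ≠ 0 := sub_ne_zero.2 hlp1
  have hlm1' : lm - 1 ≠ 0 := sub_ne_zero.2 hlm1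
  have hXne1 : lm*(lp-1)/(lp*(lm-1)) ≠ 1 := by
    intro h
    rw [div_eq_one_iff_eq (mul_ne_zero hlpne hlm1')] at h
    apply hne; nlinarith [h]
  constructor
  · intro t ht
    have hd := hden t ht
    have hlin1 : HasDerivAt (fun u : ℝ => lp*C + lm*u) lm t := by
      simpa using ((hasDerivAt_id t).const_mul lm).const_add (lp*C)
    have hlin2 : HasDerivAt (fun u : ℝ => lp*u + lm*C) lp t := by
      simpa using ((hasDerivAt_id t).const_mul lp).add_const (lm*C)
    have hE1 : HasDerivAt (fun u => Real.exp (lp*C + lm*u))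
        (Real.exp (lp*C + lm*t) * lm) t := hlin1.exp
    have hE2 : HasDerivAt (fun u => Real.exp (lp*u + lm*C))
        (Real.exp (lp*t + lm*C) * lp) t := hlin2.exp
    have hN : HasDerivAt (fun u => lm * Real.exp (lp*C + lm*u) - lp * Real.exp (lp*u + lm*C))
        (lm * (Real.exp (lp*C + lm*t) * lm) - lp * (Real.exp (lp*t + lm*C) * lp)) t :=
      (hE1.const_mul lm).sub (hE2.const_mul lp)
    have hD : HasDerivAt (fun u => Real.exp (lp*C + lm*u) - Real.exp (lp*u + lm*C))
        (Real.exp (lp*C + lm*t) * lm - Real.exp (lp*t + lm*C) * lp) t := hE1.sub hE2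
    have hdiv := hN.div hD hd
    have hfun : r = fun u =>
        (lm * Real.exp (lp * C + lm * u) - lp * Real.exp (lp * u + lm * C)) /
        (Real.exp (lp * C + lm * u) - Real.exp (lp * u + lm * C)) := funext hr
    rw [hfun]
    convert hdiv using 1
    · rfl
    · rfl
    · rfl
    rw [hprod]
    have h2a : 2*a = lp + lm := hsum
    rw [h2a]
    field_simp
    ring
  · rw [hr T]
    have hX : Real.exp (lp*T + lm*C) = Real.exp (lp*C + lm*T) * (lm*(lp-1)/(lp*(lm-1))) := by
      rw [← Real.exp_log hlog, ← Real.exp_add]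
      congr 1
      rw [hC]
      field_simp
      ring
    rw [hX]
    have hE : Real.exp (lp*C + lm*T) ≠ 0 := Real.exp_ne_zero _
    have hrew : Real.exp (lp*C+lm*T) - Real.exp (lp*C+lm*T) * (lm*(lp-1)/(lp*(lm-1)))
        = Real.exp (lp*C+lm*T) * (1 - lm*(lp-1)/(lp*(lm-1))) := by ring
    have hdT : Real.exp (lp*C+lm*T) - Real.exp (lp*C+lm*T) * (lm*(lp-1)/(lp*(lm-1))) ≠ 0 := by
      rw [hrew]
      exact mul_ne_zero hE (sub_ne_zero.2 (fun h => hXne1 h.symm))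
    rw [div_eq_iff hdT, hprod]
    field_simp
    ring
end

section
/- The scalar inequality (1−κ)x − κy − (1/2)(x+y)² ≤ (1/2)(1−κ)² · 𝟙_{κ<1} holds for all x, y ≥ 0 and all κ ∈ ℝ. -/
/-- Pointwise Fourier-symbol inequality:
`(1−κ)x − κy − (1/2)(x+y)² ≤ (1/2)(1−κ)²·𝟙_{κ<1}` for all `x, y ≥ 0`. -/
theorem stmt7 (κ x y : ℝ) (hx : 0 ≤ x) (hy : 0 ≤ y) :
    (1 - κ) * x - κ * y - (1 / 2) * (x + y) ^ 2 ≤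
      (1 / 2) * (1 - κ) ^ 2 * (if κ < 1 then 1 else 0) := by
  split_ifs with h
  · nlinarith [sq_nonneg (x + y - (1 - κ)), mul_nonneg hy (le_of_lt (by linarith : (0:ℝ) < 1 - κ)), sq_nonneg (x+y)]
  · push_neg at h
    nlinarith [sq_nonneg (x+y), mul_nonneg hx (by linarith : (0:ℝ) ≤ κ - 1), mul_nonneg hy (by linarith : (0:ℝ) ≤ κ)]
end
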